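/- arXiv:1202.5728 — 2 statements merged into one kernel-verified Lean document; each statement's English description precedes it below -/
import Mathlib

section
/- Fix α > −1. Let f ∈ L²((0,∞), μ_α) and, for β > 0, define f_β(x) = f((β/2)(1−x))·1_{[−1,1]}(x). Then f_β ∈ L²((−1,1), μ_{α,β}) and lim_{β→∞} ‖f_β‖_{L²(μ_{α,β})} = ‖f‖_{L²(μ_α)}. -/
open MeasureTheory Filter Real
open scoped ENNReal NNReal

noncomputable section

/-- Jacobi polynomial `P_n^{(a,b)}` in Szegő's normalization. -/
def jacobiP (a b : ℝ) (n : ℕ) (x : ℝ) : ℝ :=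
  ∑ ν ∈ Finset.range (n + 1),
    (Real.Gamma (n + a + 1) / (Real.Gamma (a + ν + 1) * (Nat.factorial (n - ν)))) *
    (Real.Gamma (n + b + 1) / (Real.Gamma (n + b - ν + 1) * (Nat.factorial ν))) *
    ((x - 1) / 2) ^ ν * ((x + 1) / 2) ^ (n - ν)

/-- Jacobi (beta) measure on `(-1,1)`. -/
def jacobiMeasure (a b : ℝ) : Measure ℝ :=
  (volume.restrict (Set.Ioo (-1 : ℝ) 1)).withDensity fun x =>
    ENNReal.ofReal ((1 - x) ^ a * (1 + x) ^ b *
      (Real.Gamma (a + b + 2) / (2 ^ (a + b + 1) * Real.Gamma (a + 1) * Real.Gamma (b + 1))))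

/-- Gegenbauer polynomial `C_n^l`. -/
def gegenbauerC (l : ℝ) (n : ℕ) (x : ℝ) : ℝ :=
  (Real.Gamma (l + 1 / 2) * Real.Gamma (n + 2 * l)) /
    (Real.Gamma (2 * l) * Real.Gamma (n + l + 1 / 2)) *
    jacobiP (l - 1 / 2) (l - 1 / 2) n x

/-- Gegenbauer measure on `(-1,1)`. -/
def gegenbauerMeasure (l : ℝ) : Measure ℝ := jacobiMeasure (l - 1 / 2) (l - 1 / 2)

/-- Gaussian measure `γ` on `ℝ`. -/
def gaussMeasure : Measure ℝ :=
  volume.withDensity fun x => ENNReal.ofReal (Real.exp (-x ^ 2) / Real.sqrt Real.pi)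

/-- Physicists' Hermite polynomial `H_n`. -/
def hermiteH : ℕ → ℝ → ℝ
  | 0, _ => 1
  | 1, x => 2 * x
  | n + 2, x => 2 * x * hermiteH (n + 1) x - 2 * (n + 1) * hermiteH n x

/-- Laguerre polynomial `L_n^a` in Szegő's normalization. -/
def laguerreL (a : ℝ) (n : ℕ) (x : ℝ) : ℝ :=
  ∑ m ∈ Finset.range (n + 1),
    (-1 : ℝ) ^ m * (Real.Gamma (n + a + 1) /
      ((Nat.factorial (n - m)) * Real.Gamma (a + m + 1) * (Nat.factorial m))) * x ^ m

/-- Gamma measure `μ_a` on `(0,∞)`. -/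
def gammaMeasure (a : ℝ) : Measure ℝ :=
  (volume.restrict (Set.Ioi (0 : ℝ))).withDensity fun x =>
    ENNReal.ofReal (x ^ a * Real.exp (-x) / Real.Gamma (a + 1))

/-- Partial sums of the Jacobi–Riesz transform series of `f`. -/
def jacobiRieszPartial (a b : ℝ) (f : ℝ → ℝ) (N : ℕ) (x : ℝ) : ℝ :=
  ∑ k ∈ Finset.Icc 1 N,
    ((∫ y, f y * jacobiP a b k y ∂jacobiMeasure a b) /
        (∫ y, (jacobiP a b k y) ^ 2 ∂jacobiMeasure a b)) *
      (((k : ℝ) + a + b + 1) / 2) / Real.sqrt ((k : ℝ) * ((k : ℝ) + a + b + 1)) *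
      Real.sqrt (1 - x ^ 2) * jacobiP (a + 1) (b + 1) (k - 1) x

/-- `g` is the Jacobi–Riesz transform of `f` (as an `L²(μ_{a,b})` limit of partial sums). -/
def IsJacobiRiesz (a b : ℝ) (f g : ℝ → ℝ) : Prop :=
  Tendsto (fun N => eLpNorm (fun x => jacobiRieszPartial a b f N x - g x) 2 (jacobiMeasure a b))
    atTop (nhds 0)

/-- Partial sums of the Gegenbauer–Riesz transform series of `f`. -/
def gegenbauerRieszPartial (l : ℝ) (f : ℝ → ℝ) (N : ℕ) (x : ℝ) : ℝ :=
  (1 / 2) * ∑ k ∈ Finset.Icc 1 N,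
    (∫ y, f y * gegenbauerC l k y ∂gegenbauerMeasure l) *
      (4 * Real.Gamma (2 * l) * ((k : ℝ) + l) * Nat.factorial k / Real.Gamma (k + 2 * l + 1)) *
      Real.sqrt (((k : ℝ) + 2 * l) / k) * Real.sqrt (1 - x ^ 2) * gegenbauerC (l + 1) (k - 1) x

/-- `g` is the Gegenbauer–Riesz transform of `f` (as an `L²(μ_l)` limit of partial sums). -/
def IsGegenbauerRiesz (l : ℝ) (f g : ℝ → ℝ) : Prop :=
  Tendsto (fun N => eLpNorm (fun x => gegenbauerRieszPartial l f N x - g x) 2 (gegenbauerMeasure l))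
    atTop (nhds 0)

/-- Partial sums of the Gaussian–Riesz transform series of `f`. -/
def gaussRieszPartial (f : ℝ → ℝ) (N : ℕ) (x : ℝ) : ℝ :=
  ∑ k ∈ Finset.Icc 1 N,
    ((∫ y, f y * hermiteH k y ∂gaussMeasure) / (2 ^ k * Nat.factorial k)) *
      Real.sqrt (2 * k) * hermiteH (k - 1) x

/-- `g` is the Gaussian–Riesz transform of `f` (as an `L²(γ)` limit of partial sums). -/
def IsGaussRiesz (f g : ℝ → ℝ) : Prop :=
  Tendsto (fun N => eLpNorm (fun x => gaussRieszPartial f N x - g x) 2 gaussMeasure)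
    atTop (nhds 0)

/-- Partial sums of the Laguerre–Riesz transform series of `f`. -/
def laguerreRieszPartial (a : ℝ) (f : ℝ → ℝ) (N : ℕ) (x : ℝ) : ℝ :=
  -∑ k ∈ Finset.Icc 1 N,
    (Real.Gamma (a + 1) * Nat.factorial k / Real.Gamma (k + a + 1)) *
      ((∫ y, f y * laguerreL a k y ∂gammaMeasure a) / Real.sqrt k) *
      Real.sqrt x * laguerreL (a + 1) (k - 1) x

/-- `g` is the Laguerre–Riesz transform of `f` (as an `L²(μ_a)` limit of partial sums). -/
def IsLaguerreRiesz (a : ℝ) (f g : ℝ → ℝ) : Prop :=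
  Tendsto (fun N => eLpNorm (fun x => laguerreRieszPartial a f N x - g x) 2 (gammaMeasure a))
    atTop (nhds 0)

/-!
The substitution `t = b (1 - x) / 2` carries `jacobiMeasure a b` to `gammaMeasure a` reweighted by
`K_b (1 - t/b)^b e^t` on `(0, b)`, where `K_b = Γ(a+b+2) / (b^(a+1) Γ(b+1))`. As
`(1 - t/b)^b ≤ e^(-t)`, the weight is at most `K_b`, which gives the integrability. As
`(1 - t/b)^b → e^(-t)` and `K_b → 1` by Wendel's limit `Γ(x+s) / (x^s Γ(x)) → 1` (a consequence
of the log-convexity of `Γ`), the weight tends to `1`, and dominated convergence gives the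
convergence of the norms.
-/

open scoped Topology

namespace Real

lemma log_Gamma_add_one_sub_log_Gamma {y : ℝ} (hy : 0 < y) :
    log (Gamma (y + 1)) - log (Gamma y) = log y := by
  rw [Gamma_add_one hy.ne', log_mul hy.ne' (Gamma_pos_of_pos hy).ne', add_sub_cancel_right]

-- Both bounds compare slopes of `log ∘ Gamma` on adjacent intervals; on `[y, y + 1]` it is `log y`.
lemma rpow_sub_one_mul_Gamma_le_Gamma_add {x s : ℝ} (hx : 1 < x) (hs : 0 < s) :
    (x - 1) ^ s * Gamma x ≤ Gamma (x + s) := by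
  have hslope := convexOn_log_Gamma.slope_mono_adjacent (x := x - 1) (y := x) (z := x + s)
    (by simp; linarith) (by simp; linarith) (by linarith) (by linarith)
  have hstep := log_Gamma_add_one_sub_log_Gamma (by linarith : 0 < x - 1)
  rw [sub_add_cancel] at hstep
  simp only [Function.comp_apply, sub_sub_cancel, add_sub_cancel_left, div_one, hstep,
    le_div_iff₀ hs] at hslope
  rw [← exp_log (Gamma_pos_of_pos (by linarith : 0 < x + s)), rpow_def_of_pos (by linarith),
    ← exp_log (Gamma_pos_of_pos (by linarith : 0 < x)), ← exp_add, exp_le_exp]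
  linarith

lemma Gamma_add_le_rpow_add_mul_Gamma {x s : ℝ} (hx : 0 < x) (hs : 0 < s) :
    Gamma (x + s) ≤ (x + s) ^ s * Gamma x := by
  have hslope := convexOn_log_Gamma.slope_mono_adjacent (x := x) (y := x + s) (z := x + s + 1)
    (by simp; linarith) (by simp; linarith) (by linarith) (by linarith)
  rw [Function.comp_def, show x + s - x = s by ring, show x + s + 1 - (x + s) = 1 by ring,
    div_one, log_Gamma_add_one_sub_log_Gamma (by linarith), div_le_iff₀ hs] at hslope
  rw [← exp_log (Gamma_pos_of_pos (by linarith : 0 < x + s)), rpow_def_of_pos (by linarith),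
    ← exp_log (Gamma_pos_of_pos hx), ← exp_add, exp_le_exp]
  linarith

lemma tendsto_add_div_self (c : ℝ) : Tendsto (fun x : ℝ => (x + c) / x) atTop (𝓝 1) := by
  have : Tendsto (fun x : ℝ => 1 + c / x) atTop (𝓝 (1 + 0)) :=
    tendsto_const_nhds.add (tendsto_const_nhds.div_atTop tendsto_id)
  rw [add_zero] at this
  refine this.congr' ?_
  filter_upwards [eventually_ne_atTop 0] with x hx
  field_simp

theorem tendsto_Gamma_add_div_rpow_mul_Gamma {s : ℝ} (hs : 0 < s) :
    Tendsto (fun x => Gamma (x + s) / (x ^ s * Gamma x)) atTop (𝓝 1) := by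
  have hlim : ∀ c, Tendsto (fun x : ℝ => ((x + c) / x) ^ s) atTop (𝓝 1) := fun c => by
    simpa using (tendsto_add_div_self c).rpow_const (Or.inl one_ne_zero)
  refine tendsto_of_tendsto_of_tendsto_of_le_of_le' (by simpa using hlim (-1)) (hlim s) ?_ ?_
  all_goals
    filter_upwards [eventually_gt_atTop 1] with x hx
    have hpos : 0 < x ^ s * Gamma x := by positivity [Gamma_pos_of_pos (by linarith : 0 < x)]
  · rw [le_div_iff₀ hpos, ← sub_eq_add_neg, div_rpow (by linarith) (by linarith)]
    calc (x - 1) ^ s / x ^ s * (x ^ s * Gamma x) = (x - 1) ^ s * Gamma x := by field_simp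
      _ ≤ _ := rpow_sub_one_mul_Gamma_le_Gamma_add hx hs
  · rw [div_le_iff₀ hpos, div_rpow (by linarith) (by linarith)]
    calc Gamma (x + s) ≤ (x + s) ^ s * Gamma x := Gamma_add_le_rpow_add_mul_Gamma (by linarith) hs
      _ = (x + s) ^ s / x ^ s * (x ^ s * Gamma x) := by field_simp

theorem one_sub_div_rpow_le_exp_neg {b t : ℝ} (hb : 0 < b) (ht : t ≤ b) :
    (1 - t / b) ^ b ≤ exp (-t) := by
  calc (1 - t / b) ^ b ≤ exp (-(t / b)) ^ b :=
        rpow_le_rpow (by rw [sub_nonneg, div_le_one hb]; exact ht)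
          (by linarith [add_one_le_exp (-(t / b))]) hb.le
    _ = exp (-t) := by rw [← exp_mul]; field_simp

end Real

theorem tendsto_eLpNorm_withDensity {α ε ι : Type*} {m : MeasurableSpace α} {μ : Measure α}
    [TopologicalSpace ε] [ContinuousENorm ε] {l : Filter ι} [l.IsCountablyGenerated]
    {p : ℝ≥0∞} {f : α → ε} {ρ : ι → α → ℝ≥0∞} {C : ℝ≥0∞}
    (hp0 : p ≠ 0) (hp : p ≠ ∞) (hf : MemLp f p μ) (hC : C ≠ ∞)
    (hρ_meas : ∀ᶠ i in l, AEMeasurable (ρ i) μ) (hρ_le : ∀ᶠ i in l, ∀ᵐ x ∂μ, ρ i x ≤ C)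
    (hρ_lim : ∀ᵐ x ∂μ, Tendsto (fun i => ρ i x) l (𝓝 1)) :
    Tendsto (fun i => eLpNorm f p (μ.withDensity (ρ i))) l (𝓝 (eLpNorm f p μ)) := by
  simp only [eLpNorm_eq_lintegral_rpow_enorm_toReal hp0 hp]
  refine (ENNReal.continuous_rpow_const.tendsto _).comp ?_
  have hfp : AEMeasurable (fun x => ‖f x‖ₑ ^ p.toReal) μ := hf.1.enorm.pow_const _
  have hdens : ∀ᶠ i in l, ∫⁻ x, ‖f x‖ₑ ^ p.toReal ∂μ.withDensity (ρ i) =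
      ∫⁻ x, ρ i x * ‖f x‖ₑ ^ p.toReal ∂μ := by
    filter_upwards [hρ_meas] with i hi
    exact lintegral_withDensity_eq_lintegral_mul₀ hi hfp
  refine Tendsto.congr' (EventuallyEq.symm hdens) ?_
  refine tendsto_lintegral_filter_of_dominated_convergence' (fun x => C * ‖f x‖ₑ ^ p.toReal)
    ?_ ?_ ?_ ?_
  · filter_upwards [hρ_meas] with i hi using hi.mul hfp
  · filter_upwards [hρ_le] with i hi
    filter_upwards [hi] with x hx using mul_le_mul_left hx _
  · rw [lintegral_const_mul'' _ hfp]
    exact ENNReal.mul_ne_top hC (lintegral_rpow_enorm_lt_top_of_eLpNorm_lt_top hp0 hp hf.2).ne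
  · filter_upwards [hρ_lim] with x hx
    simpa using ENNReal.Tendsto.mul_const hx (Or.inl one_ne_zero)

open Set

lemma image_Ioo_neg_one_one {b : ℝ} (hb : 0 < b) :
    (fun x : ℝ => b / 2 * (1 - x)) '' Ioo (-1) 1 = Ioo 0 b := by
  ext t
  constructor
  · rintro ⟨x, ⟨hx1, hx2⟩, rfl⟩
    constructor <;> nlinarith
  · rintro ⟨ht0, htb⟩
    refine ⟨1 - 2 * t / b, ⟨?_, ?_⟩, by field_simp; ring⟩
    · have : 2 * t / b < 2 := by rw [div_lt_iff₀ hb]; linarith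
      linarith
    · have : 0 < 2 * t / b := by positivity
      linarith

lemma map_jacobiMeasure {a b : ℝ} (hb : 0 < b) :
    (jacobiMeasure a b).map (fun x => b / 2 * (1 - x)) =
      (volume.restrict (Ioo 0 b)).withDensity fun t => ENNReal.ofReal
        (t ^ a * (1 - t / b) ^ b *
          (Gamma (a + b + 2) / (b ^ (a + 1) * Gamma (a + 1) * Gamma (b + 1)))) := by
  have hT : Measurable (fun x : ℝ => b / 2 * (1 - x)) := by fun_prop
  ext s hs
  rw [Measure.map_apply hT hs, jacobiMeasure, withDensity_apply _ (hT hs), withDensity_apply _ hs,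
    Measure.restrict_restrict (hT hs), Measure.restrict_restrict hs, ← image_Ioo_neg_one_one hb,
    ← image_preimage_inter,
    lintegral_image_eq_lintegral_abs_deriv_mul ((hT hs).inter measurableSet_Ioo)
      (f' := fun _ => -(b / 2)) (fun x _ => ?_) (fun x _ y _ h => by simpa [hb.ne'] using h)]
  · refine setLIntegral_congr_fun ((hT hs).inter measurableSet_Ioo) fun x ⟨_, hx1, hx2⟩ => ?_
    rw [← ENNReal.ofReal_mul (abs_nonneg _)]
    congr 1
    have h1 : 1 - b / 2 * (1 - x) / b = (1 + x) / 2 := by field_simp; ring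
    rw [h1, abs_neg, abs_of_pos (half_pos hb), mul_rpow (half_pos hb).le (by linarith),
      div_rpow hb.le zero_le_two, div_rpow (by linarith : 0 ≤ 1 + x) zero_le_two, rpow_add hb,
      rpow_one, rpow_add two_pos, rpow_add two_pos, rpow_one]
    field_simp
  · exact ((hasDerivAt_id x).const_sub 1 |>.const_mul (b / 2)).hasDerivWithinAt.congr_deriv
      (by ring)

/-- The density of `(jacobiMeasure a b).map (fun x => b / 2 * (1 - x))` with respect to
`gammaMeasure a`. -/
def betaGammaRatio (a b t : ℝ) : ℝ :=
  (Ioo 0 b).indicator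
    (fun t => Gamma (a + b + 2) / (b ^ (a + 1) * Gamma (b + 1)) * ((1 - t / b) ^ b * exp t)) t

lemma gammaMeasure_withDensity_betaGammaRatio {a b : ℝ} (ha : -1 < a) :
    (gammaMeasure a).withDensity (fun t => ENNReal.ofReal (betaGammaRatio a b t)) =
      (volume.restrict (Ioo 0 b)).withDensity fun t => ENNReal.ofReal
        (t ^ a * (1 - t / b) ^ b *
          (Gamma (a + b + 2) / (b ^ (a + 1) * Gamma (a + 1) * Gamma (b + 1)))) := by
  rw [gammaMeasure, ← withDensity_mul _ (by fun_prop) (by unfold betaGammaRatio; measurability),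
    ← inter_eq_self_of_subset_left (Ioo_subset_Ioi_self : Ioo (0 : ℝ) b ⊆ Ioi 0),
    ← Measure.restrict_restrict measurableSet_Ioo, ← withDensity_indicator measurableSet_Ioo]
  congr 1
  funext t
  by_cases ht : t ∈ Ioo 0 b
  · have hΓ := Gamma_pos_of_pos (by linarith : 0 < a + 1)
    simp only [Pi.mul_apply, betaGammaRatio, indicator_of_mem ht]
    rw [← ENNReal.ofReal_mul (by have := rpow_pos_of_pos ht.1 a; positivity), exp_neg]
    congr 1
    field_simp
  · simp [betaGammaRatio, ht]

lemma tendsto_Gamma_add_two_div_rpow_mul_Gamma_add_one {a : ℝ} (ha : -2 < a) :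
    Tendsto (fun b => Gamma (a + b + 2) / (b ^ (a + 1) * Gamma (b + 1))) atTop (𝓝 1) := by
  refine (tendsto_Gamma_add_div_rpow_mul_Gamma (by linarith : 0 < a + 2)).congr' ?_
  filter_upwards [eventually_gt_atTop 0] with b hb
  rw [Gamma_add_one hb.ne', show a + 2 = (a + 1) + 1 by ring, rpow_add_one hb.ne',
    show b + (a + 1 + 1) = a + b + 2 by ring]
  ring

lemma betaGammaRatio_le {a b : ℝ} (ha : -1 < a) (hb : 0 < b) (t : ℝ) :
    betaGammaRatio a b t ≤ Gamma (a + b + 2) / (b ^ (a + 1) * Gamma (b + 1)) := by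
  have hK : 0 ≤ Gamma (a + b + 2) / (b ^ (a + 1) * Gamma (b + 1)) := by
    have := Gamma_pos_of_pos (by linarith : 0 < a + b + 2)
    have := Gamma_pos_of_pos (by linarith : 0 < b + 1)
    positivity
  by_cases ht : t ∈ Ioo 0 b
  · rw [betaGammaRatio, indicator_of_mem ht]
    refine mul_le_of_le_one_right hK ?_
    calc (1 - t / b) ^ b * exp t ≤ exp (-t) * exp t := by
          gcongr; exact one_sub_div_rpow_le_exp_neg hb ht.2.le
      _ = 1 := by rw [← exp_add, neg_add_cancel, exp_zero]
  · rwa [betaGammaRatio, indicator_of_notMem ht]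

lemma tendsto_betaGammaRatio {a t : ℝ} (ha : -1 < a) (ht : 0 < t) :
    Tendsto (fun b => betaGammaRatio a b t) atTop (𝓝 1) := by
  have hexp : Tendsto (fun b : ℝ => (1 - t / b) ^ b * exp t) atTop (𝓝 1) := by
    simpa [← exp_add, sub_eq_add_neg, neg_div] using
      (tendsto_one_add_div_rpow_exp (-t)).mul_const (exp t)
  have hK := tendsto_Gamma_add_two_div_rpow_mul_Gamma_add_one (by linarith : -2 < a)
  rw [← one_mul (1 : ℝ)]
  refine (hK.mul hexp).congr' ?_
  filter_upwards [eventually_gt_atTop t] with b hb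
  rw [betaGammaRatio, indicator_of_mem (show t ∈ Ioo 0 b from ⟨ht, hb⟩)]

lemma ae_pos_gammaMeasure (a : ℝ) : ∀ᵐ t ∂gammaMeasure a, 0 < t :=
  (withDensity_absolutelyContinuous _ _).ae_le (ae_restrict_mem measurableSet_Ioi)

section JacobiPullback

variable {E : Type*} [NormedAddCommGroup E] {a b : ℝ} {g : ℝ → E}

lemma indicator_Icc_ae_eq_jacobiMeasure {M : Type*} [Zero M] (g : ℝ → M) :
    (Icc (-1) 1).indicator g =ᵐ[jacobiMeasure a b] g := by
  filter_upwards [(withDensity_absolutelyContinuous _ _).ae_le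
    (ae_restrict_mem measurableSet_Ioo)] with x hx
  exact indicator_of_mem (Ioo_subset_Icc_self hx) g

lemma eLpNorm_indicator_comp_jacobiMeasure
    (hg : AEStronglyMeasurable g ((jacobiMeasure a b).map fun x => b / 2 * (1 - x))) (p : ℝ≥0∞) :
    eLpNorm ((Icc (-1) 1).indicator fun x => g (b / 2 * (1 - x))) p (jacobiMeasure a b) =
      eLpNorm g p ((jacobiMeasure a b).map fun x => b / 2 * (1 - x)) := by
  rw [eLpNorm_congr_ae (indicator_Icc_ae_eq_jacobiMeasure _), eLpNorm_map_measure hg (by fun_prop)]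
  rfl

lemma memLp_indicator_comp_jacobiMeasure_iff
    (hg : AEStronglyMeasurable g ((jacobiMeasure a b).map fun x => b / 2 * (1 - x))) (p : ℝ≥0∞) :
    MemLp ((Icc (-1) 1).indicator fun x => g (b / 2 * (1 - x))) p (jacobiMeasure a b) ↔
      MemLp g p ((jacobiMeasure a b).map fun x => b / 2 * (1 - x)) := by
  rw [memLp_congr_ae (indicator_Icc_ae_eq_jacobiMeasure _), memLp_map_measure_iff hg (by fun_prop)]
  rfl

end JacobiPullback

/-- Norm relation: `‖f_β‖_{L²(μ_{α,β})} → ‖f‖_{L²(μ_α)}` as `β → ∞`. -/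
theorem stmt_5 (a : ℝ) (ha : -1 < a) (f : ℝ → ℝ) (hf : MemLp f 2 (gammaMeasure a)) :
    (∀ b : ℝ, 0 < b →
      MemLp (Set.indicator (Set.Icc (-1 : ℝ) 1) fun x => f (b / 2 * (1 - x))) 2
        (jacobiMeasure a b)) ∧
    Tendsto (fun b : ℝ =>
        eLpNorm (Set.indicator (Set.Icc (-1 : ℝ) 1) fun x => f (b / 2 * (1 - x))) 2
          (jacobiMeasure a b))
      atTop (nhds (eLpNorm f 2 (gammaMeasure a))) := by
  have hmap : ∀ b, 0 < b → (jacobiMeasure a b).map (fun x => b / 2 * (1 - x)) =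
      (gammaMeasure a).withDensity fun t => ENNReal.ofReal (betaGammaRatio a b t) :=
    fun b hb => by rw [map_jacobiMeasure hb, gammaMeasure_withDensity_betaGammaRatio ha]
  have hf_map : ∀ b, 0 < b →
      AEStronglyMeasurable f ((jacobiMeasure a b).map fun x => b / 2 * (1 - x)) :=
    fun b hb => hmap b hb ▸ hf.1.mono_ac (withDensity_absolutelyContinuous _ _)
  refine ⟨fun b hb => ?_, ?_⟩
  · rw [memLp_indicator_comp_jacobiMeasure_iff (hf_map b hb), hmap b hb]
    refine hf.of_measure_le_smul
      (c := ENNReal.ofReal (Gamma (a + b + 2) / (b ^ (a + 1) * Gamma (b + 1))))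
      ENNReal.ofReal_ne_top ?_
    rw [← withDensity_const]
    exact withDensity_mono (ae_of_all _ fun t =>
      ENNReal.ofReal_le_ofReal (betaGammaRatio_le ha hb t))
  · have hle : ∀ᶠ b in atTop, ∀ t, ENNReal.ofReal (betaGammaRatio a b t) ≤ 2 := by
      filter_upwards [eventually_gt_atTop 0, (tendsto_Gamma_add_two_div_rpow_mul_Gamma_add_one
        (by linarith)).eventually_lt_const one_lt_two] with b hb hK t
      exact ENNReal.ofReal_le_of_le_toReal (by simpa using (betaGammaRatio_le ha hb t).trans hK.le)
    have hlim := tendsto_eLpNorm_withDensity two_ne_zero ENNReal.ofNat_ne_top hf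
      ENNReal.ofNat_ne_top (.of_forall fun b => by unfold betaGammaRatio; measurability)
      (hle.mono fun b hb => ae_of_all _ hb)
      ((ae_pos_gammaMeasure a).mono fun t ht => by
        simpa using ENNReal.tendsto_ofReal (tendsto_betaGammaRatio ha ht))
    refine hlim.congr' ?_
    filter_upwards [eventually_gt_atTop 0] with b hb
    rw [eLpNorm_indicator_comp_jacobiMeasure (hf_map b hb), hmap b hb]

end
end

section
/- Fix α > −1. Let f ∈ L²((0,∞), μ_α) and for β > 0 set f_β(x) = f((β/2)(1−x))·1_{[−1,1]}(x). Then ‖f_β‖²_{L²(μ_{α,β})} ≤ [Γ(α+β+2)/(Γ(β+1)β^{α+1})] · ‖f‖²_{L²(μ_α)}; in particular f_β ∈ L²((−1,1), μ_{α,β}). -/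
open MeasureTheory Filter Real
open scoped ENNReal NNReal

noncomputable section

/-! The affine change of variables `y = (β/2)(1 - x)` maps `(-1, 1)` onto `(0, β)` and pushes
`μ_{α,β}` forward to the measure with density proportional to `y^α (1 - y/β)^β` on `(0, β)`.
Since `(1 - y/β)^β ≤ e^{-y}`, this pushforward is at most `Γ(α+β+2) / (Γ(β+1) β^{α+1})` times
`μ_α`, and comparing integrals against the two measures gives both the membership in `L²` and the
bound. -/

theorem MeasurableEquiv.map_withDensity {α β : Type*} [MeasurableSpace α] [MeasurableSpace β]
    (e : α ≃ᵐ β) (μ : Measure α) (w : α → ℝ≥0∞) :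
    (μ.withDensity w).map e = (μ.map e).withDensity (w ∘ e.symm) := by
  ext s hs
  rw [e.map_apply, withDensity_apply _ hs, e.restrict_map, lintegral_map_equiv,
    withDensity_apply _ (e.measurable hs)]
  simp

section ComparisonOfMeasures

variable {α β : Type*} [MeasurableSpace α] [MeasurableSpace β] {μ : Measure α} {ν : Measure β}
  {φ : α → β} {c : ℝ≥0∞}

theorem MeasureTheory.MemLp.comp_of_map_le_smul {E : Type*} [NormedAddCommGroup E] {p : ℝ≥0∞}
    {f : β → E} (hf : MemLp f p ν) (hφ : AEMeasurable φ μ) (hc : c ≠ ∞)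
    (hle : μ.map φ ≤ c • ν) : MemLp (f ∘ φ) p μ :=
  ((hf.smul_measure hc).mono_measure hle).comp_of_map hφ

theorem MeasureTheory.integral_comp_le_of_map_le_smul {f : β → ℝ} (hf : Integrable f ν)
    (hf₀ : 0 ≤ f) (hφ : AEMeasurable φ μ) (hc : c ≠ ∞) (hle : μ.map φ ≤ c • ν) :
    ∫ x, f (φ x) ∂μ ≤ c.toReal * ∫ y, f y ∂ν := by
  rw [← integral_map hφ (hf.1.mono_ac (Measure.absolutelyContinuous_of_le_smul hle)),
    ← smul_eq_mul, ← integral_smul_measure]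
  exact integral_mono_measure hle (.of_forall hf₀) (hf.smul_measure hc)

end ComparisonOfMeasures

theorem Real.one_sub_rpow_le_exp_neg_mul {t b : ℝ} (ht : t ≤ 1) (hb : 0 ≤ b) :
    (1 - t) ^ b ≤ exp (-(b * t)) := by
  calc (1 - t) ^ b ≤ exp (-t) ^ b := rpow_le_rpow (by linarith) (one_sub_le_exp_neg t) hb
    _ = exp (-(b * t)) := by rw [← exp_mul]; ring_nf

def affineFlip (b : ℝ) (hb : b ≠ 0) : ℝ ≃ᵐ ℝ where
  toFun x := b / 2 * (1 - x)
  invFun y := 1 - 2 * y / b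
  left_inv x := by field_simp; ring
  right_inv y := by field_simp; ring
  measurable_toFun := by change Measurable fun x : ℝ => b / 2 * (1 - x); fun_prop
  measurable_invFun := by change Measurable fun y : ℝ => 1 - 2 * y / b; fun_prop

theorem map_affineFlip_volume {b : ℝ} (hb : 0 < b) :
    volume.map (affineFlip b hb.ne') = ENNReal.ofReal (2 / b) • volume := by
  have hb2 : -(b / 2) ≠ 0 := neg_ne_zero.mpr (by positivity)
  have hcomp : ⇑(affineFlip b hb.ne') = (b / 2 + ·) ∘ (-(b / 2) * ·) := by
    funext x; show b / 2 * (1 - x) = b / 2 + -(b / 2) * x; ring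
  rw [hcomp, ← Measure.map_map (measurable_const_add _) (measurable_const_mul _),
    Real.map_volume_mul_left hb2, Measure.map_smul, map_add_left_eq_self]
  congr 2
  rw [abs_inv, abs_neg, abs_of_pos (by positivity)]
  field_simp

theorem jacobi_density_le_gamma_density {a b x : ℝ} (ha : -1 < a) (hb : 0 < b)
    (hx : x ∈ Set.Ioo (-1 : ℝ) 1) :
    2 / b * ((1 - x) ^ a * (1 + x) ^ b *
        (Gamma (a + b + 2) / (2 ^ (a + b + 1) * Gamma (a + 1) * Gamma (b + 1)))) ≤
      Gamma (a + b + 2) / (Gamma (b + 1) * b ^ (a + 1)) *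
        ((b / 2 * (1 - x)) ^ a * exp (-(b / 2 * (1 - x))) / Gamma (a + 1)) := by
  obtain ⟨hx₁, hx₂⟩ := hx
  obtain ⟨t, rfl⟩ : ∃ t, x = 1 - 2 * t := ⟨(1 - x) / 2, by ring⟩
  have ht₀ : 0 < t := by linarith
  have ht₁ : t < 1 := by linarith
  have hΓa : 0 < Gamma (a + 1) := Gamma_pos_of_pos (by linarith)
  have hΓb : 0 < Gamma (b + 1) := Gamma_pos_of_pos (by linarith)
  have h2a : (0 : ℝ) < 2 ^ a := rpow_pos_of_pos two_pos a
  have h2b : (0 : ℝ) < 2 ^ b := rpow_pos_of_pos two_pos b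
  have hba : 0 < b ^ a := rpow_pos_of_pos hb a
  set K := Gamma (a + b + 2) / (b * Gamma (a + 1) * Gamma (b + 1)) with hK
  have hK₀ : 0 < K := by have := Gamma_pos_of_pos (show 0 < a + b + 2 by linarith); positivity
  calc _ = K * t ^ a * (1 - t) ^ b := by
        rw [show 1 - (1 - 2 * t) = 2 * t by ring, show 1 + (1 - 2 * t) = 2 * (1 - t) by ring,
          mul_rpow zero_le_two ht₀.le, mul_rpow zero_le_two (by linarith),
          rpow_add_one two_ne_zero, rpow_add two_pos, hK]
        field_simp
    _ ≤ K * t ^ a * exp (-(b * t)) := by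
        have := rpow_pos_of_pos ht₀ a
        gcongr
        exact one_sub_rpow_le_exp_neg_mul ht₁.le hb.le
    _ = _ := by
        rw [show b / 2 * (1 - (1 - 2 * t)) = b * t by ring, mul_rpow hb.le ht₀.le,
          rpow_add_one hb.ne', hK]
        field_simp

theorem map_jacobiMeasure_le {a b : ℝ} (ha : -1 < a) (hb : 0 < b) :
    (jacobiMeasure a b).map (affineFlip b hb.ne') ≤
      ENNReal.ofReal (Gamma (a + b + 2) / (Gamma (b + 1) * b ^ (a + 1))) • gammaMeasure a := by
  set e := affineFlip b hb.ne'
  rw [jacobiMeasure, ← withDensity_indicator measurableSet_Ioo, e.map_withDensity,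
    map_affineFlip_volume hb, withDensity_smul_measure,
    ← withDensity_smul' _ _ ENNReal.ofReal_ne_top, gammaMeasure,
    ← withDensity_indicator measurableSet_Ioi,
    ← withDensity_smul' _ _ ENNReal.ofReal_ne_top]
  refine withDensity_mono (.of_forall fun y => ?_)
  obtain ⟨x, rfl⟩ := e.surjective y
  simp only [Pi.smul_apply, Function.comp_apply, e.symm_apply_apply, smul_eq_mul]
  by_cases hx : x ∈ Set.Ioo (-1 : ℝ) 1
  · have hex : e x ∈ Set.Ioi 0 := mul_pos (half_pos hb) (by linarith [hx.2])
    rw [Set.indicator_of_mem hx, Set.indicator_of_mem hex, ← ENNReal.ofReal_mul (by positivity),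
      ← ENNReal.ofReal_mul (div_nonneg (Gamma_pos_of_pos (by linarith)).le (by positivity))]
    exact ENNReal.ofReal_le_ofReal (jacobi_density_le_gamma_density ha hb hx)
  · simp [Set.indicator_of_notMem hx]

/-- Quantitative bound: `‖f_β‖²_{L²(μ_{α,β})} ≤ [Γ(α+β+2)/(Γ(β+1)β^{α+1})] ‖f‖²_{L²(μ_α)}`. -/
theorem stmt_11 (a : ℝ) (ha : -1 < a) (f : ℝ → ℝ) (hf : MemLp f 2 (gammaMeasure a))
    (b : ℝ) (hb : 0 < b) :
    MemLp (Set.indicator (Set.Icc (-1 : ℝ) 1) fun x => f (b / 2 * (1 - x))) 2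
        (jacobiMeasure a b) ∧
      (∫ x, Set.indicator (Set.Icc (-1 : ℝ) 1) (fun y => f (b / 2 * (1 - y))) x ^ 2
          ∂jacobiMeasure a b) ≤
        Real.Gamma (a + b + 2) / (Real.Gamma (b + 1) * b ^ (a + 1)) *
          ∫ x, f x ^ 2 ∂gammaMeasure a := by
  set e := affineFlip b hb.ne'
  have hle := map_jacobiMeasure_le ha hb
  have hc : 0 ≤ Gamma (a + b + 2) / (Gamma (b + 1) * b ^ (a + 1)) :=
    div_nonneg (Gamma_pos_of_pos (by linarith)).le (by positivity)
  have hIoo : ∀ᵐ x ∂jacobiMeasure a b, x ∈ Set.Ioo (-1 : ℝ) 1 :=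
    (withDensity_absolutelyContinuous _ _).ae_le (ae_restrict_mem measurableSet_Ioo)
  have hae : (Set.Icc (-1 : ℝ) 1).indicator (fun x => f (b / 2 * (1 - x)))
      =ᵐ[jacobiMeasure a b] f ∘ e := by
    filter_upwards [hIoo] with x hx
    exact Set.indicator_of_mem (Set.Ioo_subset_Icc_self hx) _
  refine ⟨(hf.comp_of_map_le_smul e.measurable.aemeasurable ENNReal.ofReal_ne_top hle).ae_eq
    hae.symm, ?_⟩
  calc _ = ∫ x, f (e x) ^ 2 ∂jacobiMeasure a b := integral_congr_ae (hae.fun_comp (· ^ 2))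
    _ ≤ _ := by
      simpa only [ENNReal.toReal_ofReal hc] using integral_comp_le_of_map_le_smul
        hf.integrable_sq (fun _ => sq_nonneg _) e.measurable.aemeasurable ENNReal.ofReal_ne_top hle

end
end
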